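/- (Corollary 4, connection with the Csörgő–Révész constant.) Let s* ≤ 1 and let F be a non-degenerate bi-s*-concave distribution function, with derivative f = F′ on J(F); f is positive on J(F) and is differentiable at Lebesgue-almost every point of J(F) with derivative f′. Define, with essential suprema taken with respect to Lebesgue measure on J(F): γ̃(F) = ess sup_{x ∈ J(F)} F(x)(1−F(x)) |f′(x)| / f(x)², γ(F) = ess sup_{x ∈ J(F)} min{F(x), 1−F(x)} |f′(x)| / f(x)², and γ̄(F) = max{ ess sup_{x ∈ J(F)} F(x) f′(x) / f(x)², ess sup_{x ∈ J(F)} −(1−F(x)) f′(x) / f(x)² }. Then (1/2) γ(F) ≤ γ̃(F) ≤ γ(F) ≤ γ̄(F) ≤ 1 − s*. -/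

import Mathlib

open Set MeasureTheory Filter
open scoped NNReal ENNReal

/-- A (cumulative) distribution function on `ℝ`: nondecreasing, `[0,1]`-valued,
right-continuous, with limit `0` at `-∞` and `1` at `+∞`. -/
def IsDistFun (F : ℝ → ℝ) : Prop :=
  Monotone F ∧ (∀ x, 0 ≤ F x ∧ F x ≤ 1) ∧
  (∀ x, ContinuousWithinAt F (Ici x) x) ∧
  Tendsto F atBot (nhds 0) ∧ Tendsto F atTop (nhds 1)

/-- `F` is non-degenerate: it takes a value strictly between 0 and 1. -/
def NonDeg (F : ℝ → ℝ) : Prop := ∃ x, 0 < F x ∧ F x < 1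

/-- `J(F) = {x : 0 < F x < 1}`. -/
def JSet (F : ℝ → ℝ) : Set ℝ := {x | 0 < F x ∧ F x < 1}

/-- `F` is bi-`s*`-concave: `F` is continuous on `ℝ` and, on `J(F)`,
for `s* < 0` both `F ^ s*` and `(1 - F) ^ s*` are convex; for `s* = 0` both
`log F` and `log (1 - F)` are concave; for `s* > 0` both `F ^ s*` and
`(1 - F) ^ s*` are concave. -/
def IsBiSStarConcave (s : ℝ) (F : ℝ → ℝ) : Prop :=
  Continuous F ∧
  (s < 0 → ConvexOn ℝ (JSet F) (fun x => F x ^ s) ∧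
    ConvexOn ℝ (JSet F) (fun x => (1 - F x) ^ s)) ∧
  (s = 0 → ConcaveOn ℝ (JSet F) (fun x => Real.log (F x)) ∧
    ConcaveOn ℝ (JSet F) (fun x => Real.log (1 - F x))) ∧
  (0 < s → ConcaveOn ℝ (JSet F) (fun x => F x ^ s) ∧
    ConcaveOn ℝ (JSet F) (fun x => (1 - F x) ^ s))

/-- The Csörgő–Révész constant `γ̃(F)`, as an essential supremum (w.r.t. Lebesgue measure on
`J(F)`) in the extended reals. -/
noncomputable def gammaTilde (F f f' : ℝ → ℝ) : EReal :=
  essSup (fun x => ((F x * (1 - F x) * |f' x| / f x ^ 2 : ℝ) : EReal))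
    (volume.restrict (JSet F))

/-- The variant `γ(F)` with `min{F, 1-F}` in place of `F(1-F)`. -/
noncomputable def gammaMin (F f f' : ℝ → ℝ) : EReal :=
  essSup (fun x => ((min (F x) (1 - F x) * |f' x| / f x ^ 2 : ℝ) : EReal))
    (volume.restrict (JSet F))

/-- The variant `γ̄(F) = max{ess sup F f'/f², ess sup −(1−F) f'/f²}`. -/
noncomputable def gammaBar (F f f' : ℝ → ℝ) : EReal :=
  max
    (essSup (fun x => ((F x * f' x / f x ^ 2 : ℝ) : EReal)) (volume.restrict (JSet F)))
    (essSup (fun x => ((-((1 - F x) * f' x) / f x ^ 2 : ℝ) : EReal))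
      (volume.restrict (JSet F)))

/-!
Let `φ` be `F` or `1 - F`, with derivative `d = ±f`. The function `d φ ^ (s - 1)` is `s⁻¹ (φ ^ s)'`
for `s ≠ 0` and `(log φ)'` for `s = 0`, so bi-`s*`-concavity makes it antitone on `J(F)`.
Differentiating once more gives `φ d' ≤ (1 - s) d²` wherever `d'` exists, i.e.
`F f' / f² ≤ 1 - s` and `-(1 - F) f' / f² ≤ 1 - s` almost everywhere on `J(F)`, which bounds `γ̄(F)`.
The other three inequalities come from pointwise comparisons of `F (1 - F)`, `min {F, 1 - F}` and
the two one-sided terms, valid since `0 ≤ F ≤ 1`.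
-/

def SConcaveOn (s : ℝ) (S : Set ℝ) (φ : ℝ → ℝ) : Prop :=
  (s < 0 → ConvexOn ℝ S (fun x => φ x ^ s)) ∧
  (s = 0 → ConcaveOn ℝ S (fun x => Real.log (φ x))) ∧
  (0 < s → ConcaveOn ℝ S (fun x => φ x ^ s))

lemma IsBiSStarConcave.sConcaveOn {s : ℝ} {F : ℝ → ℝ} (h : IsBiSStarConcave s F) :
    SConcaveOn s (JSet F) F :=
  ⟨fun hs => (h.2.1 hs).1, fun hs => (h.2.2.1 hs).1, fun hs => (h.2.2.2 hs).1⟩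

lemma IsBiSStarConcave.sConcaveOn_one_sub {s : ℝ} {F : ℝ → ℝ} (h : IsBiSStarConcave s F) :
    SConcaveOn s (JSet F) (fun x => 1 - F x) :=
  ⟨fun hs => (h.2.1 hs).2, fun hs => (h.2.2.1 hs).2, fun hs => (h.2.2.2 hs).2⟩

lemma Continuous.isOpen_JSet {F : ℝ → ℝ} (hF : Continuous F) : IsOpen (JSet F) :=
  isOpen_Ioo.preimage hF

lemma ConvexOn.monotoneOn_of_hasDerivAt {S : Set ℝ} {g g' : ℝ → ℝ} (hg : ConvexOn ℝ S g)
    (hd : ∀ y ∈ S, HasDerivAt g (g' y) y) : MonotoneOn g' S :=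
  (hg.monotoneOn_deriv fun y hy => (hd y hy).differentiableAt).congr fun y hy => (hd y hy).deriv

lemma ConcaveOn.antitoneOn_of_hasDerivAt {S : Set ℝ} {g g' : ℝ → ℝ} (hg : ConcaveOn ℝ S g)
    (hd : ∀ y ∈ S, HasDerivAt g (g' y) y) : AntitoneOn g' S :=
  (hg.antitoneOn_deriv fun y hy => (hd y hy).differentiableAt).congr fun y hy => (hd y hy).deriv

section SConcave

variable {s : ℝ} {S : Set ℝ} {φ d : ℝ → ℝ}

lemma SConcaveOn.antitoneOn_deriv_mul_rpow (hφ : SConcaveOn s S φ) (hpos : ∀ y ∈ S, 0 < φ y)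
    (hd : ∀ y ∈ S, HasDerivAt φ (d y) y) : AntitoneOn (fun y => d y * φ y ^ (s - 1)) S := by
  have hd_rpow (y) (hy : y ∈ S) :
      HasDerivAt (fun z => φ z ^ s) (s * (d y * φ y ^ (s - 1))) y := by
    convert (hd y hy).rpow_const (p := s) (Or.inl (hpos y hy).ne') using 1
    ring
  rcases lt_trichotomy s 0 with hs | rfl | hs
  · intro a ha b hb hab
    exact (mul_le_mul_left_of_neg hs).1 <|
      (hφ.1 hs).monotoneOn_of_hasDerivAt hd_rpow ha hb hab
  · refine ((hφ.2.1 rfl).antitoneOn_of_hasDerivAt fun y hy => (hd y hy).log (hpos y hy).ne').congr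
      fun y _ => ?_
    simp only [zero_sub, Real.rpow_neg_one, div_eq_mul_inv]
  · intro a ha b hb hab
    exact (mul_le_mul_iff_right₀ hs).1 <|
      (hφ.2.2 hs).antitoneOn_of_hasDerivAt hd_rpow ha hb hab

theorem SConcaveOn.mul_deriv_le (hS : IsOpen S) (hφ : SConcaveOn s S φ)
    (hpos : ∀ y ∈ S, 0 < φ y) (hd : ∀ y ∈ S, HasDerivAt φ (d y) y)
    {x d' : ℝ} (hx : x ∈ S) (hd' : HasDerivAt d d' x) :
    φ x * d' ≤ (1 - s) * d x ^ 2 := by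
  have hφx := hpos x hx
  have hderiv : HasDerivAt (fun y => d y * φ y ^ (s - 1))
      (φ x ^ (s - 2) * (φ x * d' - (1 - s) * d x ^ 2)) x := by
    refine (hd'.mul ((hd x hx).rpow_const (p := s - 1) (Or.inl hφx.ne'))).congr_deriv ?_
    rw [show s - 1 - 1 = s - 2 by ring, show s - 1 = s - 2 + 1 by ring,
      Real.rpow_add_one hφx.ne']
    ring
  have hnonpos := hderiv.hasDerivWithinAt.nonpos_of_antitoneOn (hS.preperfect x hx)
    (hφ.antitoneOn_deriv_mul_rpow hpos hd)
  have := nonpos_of_mul_nonpos_right hnonpos (Real.rpow_pos_of_pos hφx _)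
  linarith

end SConcave

lemma mul_one_sub_le_min {a : ℝ} (h0 : 0 ≤ a) (h1 : a ≤ 1) : a * (1 - a) ≤ min a (1 - a) :=
  le_min (by nlinarith) (by nlinarith)

lemma min_le_two_mul_mul_one_sub {a : ℝ} (h0 : 0 ≤ a) (h1 : a ≤ 1) :
    min a (1 - a) ≤ 2 * a * (1 - a) := by
  rcases le_total a (1 - a) with h | h
  · rw [min_eq_left h]; nlinarith
  · rw [min_eq_right h]; nlinarith

lemma min_one_sub_mul_abs_le_max (a b : ℝ) :
    min a (1 - a) * |b| ≤ max (a * b) (-((1 - a) * b)) := by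
  rcases le_total 0 b with hb | hb
  · rw [abs_of_nonneg hb]
    exact (mul_le_mul_of_nonneg_right (min_le_left _ _) hb).trans (le_max_left _ _)
  · rw [abs_of_nonpos hb, ← mul_neg]
    exact (mul_le_mul_of_nonneg_right (min_le_right _ _) (neg_nonneg.2 hb)).trans
      (le_max_right _ _)

lemma essSup_coe_le_mul_essSup_coe {α : Type*} [MeasurableSpace α] {μ : Measure α}
    {g h : α → ℝ} {c : ℝ} (hc : 0 ≤ c) (hgh : ∀ᵐ x ∂μ, g x ≤ c * h x) :
    essSup (fun x => (g x : EReal)) μ ≤ c * essSup (fun x => (h x : EReal)) μ := by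
  refine essSup_le_of_ae_le _ ?_
  filter_upwards [hgh, ae_le_essSup (f := fun x => (h x : EReal)) (μ := μ)] with x hx hh
  calc (g x : EReal) ≤ ((c * h x : ℝ) : EReal) := EReal.coe_le_coe_iff.2 hx
    _ = c * (h x : EReal) := EReal.coe_mul _ _
    _ ≤ c * essSup (fun x => (h x : EReal)) μ :=
      mul_le_mul_of_nonneg_left hh (EReal.coe_nonneg.2 hc)

section Gamma

variable {s : ℝ} {F f f' : ℝ → ℝ}

lemma gammaTilde_le_gammaMin (hJ : MeasurableSet (JSet F)) :
    gammaTilde F f f' ≤ gammaMin F f f' := by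
  refine essSup_mono_ae ?_
  filter_upwards [ae_restrict_mem hJ] with x hx
  refine EReal.coe_le_coe_iff.2 (div_le_div_of_nonneg_right ?_ (sq_nonneg _))
  exact mul_le_mul_of_nonneg_right (mul_one_sub_le_min hx.1.le hx.2.le) (abs_nonneg _)

lemma gammaMin_le_two_mul_gammaTilde (hJ : MeasurableSet (JSet F)) :
    gammaMin F f f' ≤ ((2 : ℝ) : EReal) * gammaTilde F f f' := by
  refine essSup_coe_le_mul_essSup_coe zero_le_two ?_
  filter_upwards [ae_restrict_mem hJ] with x hx
  rw [← mul_div_assoc, ← mul_assoc, ← mul_assoc]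
  refine div_le_div_of_nonneg_right ?_ (sq_nonneg _)
  exact mul_le_mul_of_nonneg_right (min_le_two_mul_mul_one_sub hx.1.le hx.2.le) (abs_nonneg _)

lemma gammaMin_le_gammaBar : gammaMin F f f' ≤ gammaBar F f f' := by
  refine essSup_le_of_ae_le _ ?_
  filter_upwards [ae_le_essSup (f := fun x => ((F x * f' x / f x ^ 2 : ℝ) : EReal))
      (μ := volume.restrict (JSet F)),
    ae_le_essSup (f := fun x => ((-((1 - F x) * f' x) / f x ^ 2 : ℝ) : EReal))
      (μ := volume.restrict (JSet F))] with x h₁ h₂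
  refine le_trans ?_ (max_le_max h₁ h₂)
  rw [← EReal.coe_strictMono.monotone.map_max, max_div_div_right (sq_nonneg _)]
  exact EReal.coe_le_coe_iff.2
    (div_le_div_of_nonneg_right (min_one_sub_mul_abs_le_max _ _) (sq_nonneg _))

lemma IsBiSStarConcave.div_sq_le_one_sub (hbi : IsBiSStarConcave s F)
    (hderiv : ∀ x ∈ JSet F, HasDerivAt F (f x) x) (hpos : ∀ x ∈ JSet F, 0 < f x)
    {x : ℝ} (hx : x ∈ JSet F) (hf' : HasDerivAt f (f' x) x) :
    F x * f' x / f x ^ 2 ≤ 1 - s ∧ -((1 - F x) * f' x) / f x ^ 2 ≤ 1 - s := by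
  have hJ := hbi.1.isOpen_JSet
  have hF := hbi.sConcaveOn.mul_deriv_le hJ (fun y hy => hy.1) hderiv hx hf'
  have h1F := hbi.sConcaveOn_one_sub.mul_deriv_le hJ (fun y hy => sub_pos.2 hy.2)
    (fun y hy => (hderiv y hy).const_sub 1) hx hf'.neg
  have hf2 : 0 < f x ^ 2 := pow_pos (hpos x hx) 2
  constructor <;> rw [div_le_iff₀ hf2] <;> linarith [neg_sq (f x)]

lemma gammaBar_le_one_sub (hbi : IsBiSStarConcave s F)
    (hderiv : ∀ x ∈ JSet F, HasDerivAt F (f x) x) (hpos : ∀ x ∈ JSet F, 0 < f x)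
    (hderiv2 : ∀ᵐ x ∂(volume.restrict (JSet F)), HasDerivAt f (f' x) x) :
    gammaBar F f f' ≤ ((1 - s : ℝ) : EReal) := by
  have hbound : ∀ᵐ x ∂(volume.restrict (JSet F)),
      F x * f' x / f x ^ 2 ≤ 1 - s ∧ -((1 - F x) * f' x) / f x ^ 2 ≤ 1 - s := by
    filter_upwards [ae_restrict_mem hbi.1.isOpen_JSet.measurableSet, hderiv2] with x hx hf'
    exact hbi.div_sq_le_one_sub hderiv hpos hx hf'
  refine max_le (essSup_le_of_ae_le _ ?_) (essSup_le_of_ae_le _ ?_) <;>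
    filter_upwards [hbound] with x hx
  exacts [EReal.coe_le_coe_iff.2 hx.1, EReal.coe_le_coe_iff.2 hx.2]

end Gamma

theorem csorgo_revesz_constant_bounds_general
    (s : ℝ)
    (F : ℝ → ℝ)
    (hbi : IsBiSStarConcave s F)
    (f f' : ℝ → ℝ)
    (hderiv : ∀ x ∈ JSet F, HasDerivAt F (f x) x)
    (hpos : ∀ x ∈ JSet F, 0 < f x)
    (hderiv2 : ∀ᵐ x ∂(volume.restrict (JSet F)), HasDerivAt f (f' x) x) :
    (1 / 2 : EReal) * gammaMin F f f' ≤ gammaTilde F f f' ∧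
    gammaTilde F f f' ≤ gammaMin F f f' ∧
    gammaMin F f f' ≤ gammaBar F f f' ∧
    gammaBar F f f' ≤ ((1 - s : ℝ) : EReal) := by
  have hJ : MeasurableSet (JSet F) := hbi.1.isOpen_JSet.measurableSet
  refine ⟨?_, gammaTilde_le_gammaMin hJ, gammaMin_le_gammaBar,
    gammaBar_le_one_sub hbi hderiv hpos hderiv2⟩
  have hhalf : (1 / 2 : EReal) = ((1 / 2 : ℝ) : EReal) := by
    rw [one_div, show (2 : EReal) = ((2 : ℝ) : EReal) by norm_cast, ← EReal.coe_inv]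
    norm_num
  calc (1 / 2 : EReal) * gammaMin F f f'
      ≤ (1 / 2 : EReal) * (((2 : ℝ) : EReal) * gammaTilde F f f') :=
        mul_le_mul_of_nonneg_left (gammaMin_le_two_mul_gammaTilde hJ) (by rw [hhalf]; norm_num)
    _ = gammaTilde F f f' := by rw [hhalf, ← mul_assoc, ← EReal.coe_mul]; norm_num

/-- Corollary 4, connection with the Csörgő–Révész constant: for a
non-degenerate bi-`s*`-concave distribution function `F` (`s* ≤ 1`) with derivative `f > 0` on
`J(F)` and a.e. derivative `f'` of `f`, one has
`(1/2) γ(F) ≤ γ̃(F) ≤ γ(F) ≤ γ̄(F) ≤ 1 - s*`. -/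
theorem csorgo_revesz_constant_bounds
    (s : ℝ) (hs : s ≤ 1)
    (F : ℝ → ℝ) (hF : IsDistFun F) (hnd : NonDeg F)
    (hbi : IsBiSStarConcave s F)
    (f f' : ℝ → ℝ)
    (hderiv : ∀ x ∈ JSet F, HasDerivAt F (f x) x)
    (hpos : ∀ x ∈ JSet F, 0 < f x)
    (hderiv2 : ∀ᵐ x ∂(volume.restrict (JSet F)), HasDerivAt f (f' x) x) :
    (1 / 2 : EReal) * gammaMin F f f' ≤ gammaTilde F f f' ∧
    gammaTilde F f f' ≤ gammaMin F f f' ∧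
    gammaMin F f f' ≤ gammaBar F f f' ∧
    gammaBar F f f' ≤ ((1 - s : ℝ) : EReal) :=
  csorgo_revesz_constant_bounds_general s F hbi f f' hderiv hpos hderiv2
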